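/- Lower-bound half of the optimistic edit-distance formula (Equation (15)): Let C be a type with decidable equality, and let t, y, z be lists over C. Then there exists k with 0 ≤ k ≤ |t| such that the Levenshtein distance (with unit insertion, deletion and substitution costs) between y and t.take k is at most the Levenshtein distance between y ++ z and t; in particular, min_{0 ≤ k ≤ |t|} ρ_levenshtein(y, t.take k) ≤ ρ_levenshtein(y ++ z, t) for every continuation z. -/

import Mathlib

/-!
Induct on `y` and, inside, on `t`, following the recursion of the edit distance. When `y` is
empty, `k = 0` works since `ρ([], []) = 0`. Otherwise whichever of deletion, insertion or
substitution realises the minimum defining `ρ(x :: (y ++ z), t)`, the same first edit followed by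
the prefix of `t` supplied by the induction hypothesis bounds `ρ(x :: y, t.take k)`; each
edit consumes at most one letter of `t`, so `k` stays within `t.length`.
-/

/-- Re-introduced: Mathlib's former `Mathlib/Data/List/EditDistance/Defs.lean`. -/
structure Levenshtein.Cost (α β δ : Type*) where
  delete : α → δ
  insert : β → δ
  substitute : α → β → δ

def Levenshtein.defaultCost {α : Type*} [DecidableEq α] : Levenshtein.Cost α α ℕ where
  delete _ := 1
  insert _ := 1
  substitute a b := if a = b then 0 else 1

def Levenshtein.impl {α β δ : Type*} [AddZeroClass δ] [Min δ] (C : Levenshtein.Cost α β δ)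
    (xs : List α) (y : β) (d : {r : List δ // 0 < r.length}) : {r : List δ // 0 < r.length} :=
  let ⟨ds, w⟩ := d
  xs.zip (ds.zip ds.tail) |>.foldr
    (init := ⟨[C.insert y + ds.getLast (List.ne_nil_of_length_pos w)], by simp⟩)
    (fun ⟨x, d₀, d₁⟩ ⟨r, w⟩ =>
      ⟨min (C.delete x + r[0]) (min (C.insert y + d₀) (C.substitute x y + d₁)) :: r, by simp⟩)

def suffixLevenshtein {α β δ : Type*} [AddZeroClass δ] [Min δ] (C : Levenshtein.Cost α β δ)
    (xs : List α) (ys : List β) : {r : List δ // 0 < r.length} :=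
  ys.foldr
    (Levenshtein.impl C xs)
    (xs.foldr (init := ⟨[0], by simp⟩) (fun a ⟨r, w⟩ => ⟨(C.delete a + r[0]) :: r, by simp⟩))

def levenshtein {α β δ : Type*} [AddZeroClass δ] [Min δ] (C : Levenshtein.Cost α β δ)
    (xs : List α) (ys : List β) : δ :=
  let ⟨r, w⟩ := suffixLevenshtein C xs ys
  r[0]

namespace Levenshtein

variable {α β δ : Type*} [AddZeroClass δ] [Min δ] (C : Cost α β δ)

theorem impl_cons (x : α) (xs : List α) (y : β) (d : δ) (ds : List δ)
    (w : 0 < (d :: ds).length) (w' : 0 < ds.length) :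
    (impl C (x :: xs) y ⟨d :: ds, w⟩).1 =
      min (C.delete x + (impl C xs y ⟨ds, w'⟩).1[0]'(impl C xs y ⟨ds, w'⟩).2)
        (min (C.insert y + d) (C.substitute x y + ds[0])) :: (impl C xs y ⟨ds, w'⟩).1 :=
  match ds, w' with | _ :: _, _ => rfl

theorem impl_cons_suffixLevenshtein (x : α) (xs : List α) (y : β) (ys : List β)
    (h : (suffixLevenshtein C (x :: xs) ys).1 =
      levenshtein C (x :: xs) ys :: (suffixLevenshtein C xs ys).1) :
    (impl C (x :: xs) y (suffixLevenshtein C (x :: xs) ys)).1 =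
      min (C.delete x + levenshtein C xs (y :: ys))
        (min (C.insert y + levenshtein C (x :: xs) ys) (C.substitute x y + levenshtein C xs ys)) ::
        (suffixLevenshtein C xs (y :: ys)).1 := by
  have h' : suffixLevenshtein C (x :: xs) ys =
      ⟨levenshtein C (x :: xs) ys :: (suffixLevenshtein C xs ys).1, Nat.succ_pos _⟩ :=
    Subtype.ext h
  rw [h', impl_cons C x xs y _ _ _ (suffixLevenshtein C xs ys).2]
  rfl

end Levenshtein

section

open Levenshtein

variable {α β δ : Type*} [AddZeroClass δ] [Min δ] (C : Levenshtein.Cost α β δ)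

theorem suffixLevenshtein_nil₁ (ys : List β) :
    (suffixLevenshtein C ([] : List α) ys).1 = [levenshtein C [] ys] := by
  cases ys <;> rfl

theorem suffixLevenshtein_cons₁ (x : α) (xs : List α) (ys : List β) :
    (suffixLevenshtein C (x :: xs) ys).1 =
      levenshtein C (x :: xs) ys :: (suffixLevenshtein C xs ys).1 := by
  induction ys with
  | nil => rfl
  | cons y ys ih =>
    change (impl C (x :: xs) y (suffixLevenshtein C (x :: xs) ys)).1 =
      (impl C (x :: xs) y (suffixLevenshtein C (x :: xs) ys)).1[0]'(impl C _ y _).2 :: _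
    simp only [impl_cons_suffixLevenshtein C x xs y ys ih, List.getElem_cons_zero]

@[simp] theorem levenshtein_nil_nil : levenshtein C ([] : List α) ([] : List β) = 0 := rfl

@[simp] theorem levenshtein_nil_cons (y : β) (ys : List β) :
    levenshtein C ([] : List α) (y :: ys) = C.insert y + levenshtein C [] ys := by
  change C.insert y + (suffixLevenshtein C ([] : List α) ys).1.getLast _ = _
  simp only [suffixLevenshtein_nil₁, List.getLast_singleton]

@[simp] theorem levenshtein_cons_nil (x : α) (xs : List α) :
    levenshtein C (x :: xs) ([] : List β) = C.delete x + levenshtein C xs [] := rfl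

theorem levenshtein_cons_cons (x : α) (xs : List α) (y : β) (ys : List β) :
    levenshtein C (x :: xs) (y :: ys) =
      min (C.delete x + levenshtein C xs (y :: ys))
        (min (C.insert y + levenshtein C (x :: xs) ys) (C.substitute x y + levenshtein C xs ys)) := by
  change (impl C (x :: xs) y (suffixLevenshtein C (x :: xs) ys)).1[0]'(impl C _ y _).2 = _
  simp only [impl_cons_suffixLevenshtein C x xs y ys (suffixLevenshtein_cons₁ C x xs ys),
    List.getElem_cons_zero]

end

theorem exists_and_le_min {ι δ : Type*} [LinearOrder δ] {p : ι → Prop} {f : ι → δ} {a b : δ}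
    (ha : ∃ i, p i ∧ f i ≤ a) (hb : ∃ i, p i ∧ f i ≤ b) : ∃ i, p i ∧ f i ≤ min a b := by
  rcases min_choice a b with h | h <;> rw [h] <;> assumption

section

variable {α β δ : Type*} [AddZeroClass δ] [LinearOrder δ] (C : Levenshtein.Cost α β δ)

theorem levenshtein_cons_left_le (x : α) (xs : List α) (ys : List β) :
    levenshtein C (x :: xs) ys ≤ C.delete x + levenshtein C xs ys := by
  cases ys with
  | nil => exact (levenshtein_cons_nil C x xs).le
  | cons y ys => exact (levenshtein_cons_cons C x xs y ys).trans_le (min_le_left _ _)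

theorem levenshtein_cons_right_le (xs : List α) (y : β) (ys : List β) :
    levenshtein C xs (y :: ys) ≤ C.insert y + levenshtein C xs ys := by
  cases xs with
  | nil => exact (levenshtein_nil_cons C y ys).le
  | cons x xs =>
    exact (levenshtein_cons_cons C x xs y ys).trans_le ((min_le_right _ _).trans (min_le_left _ _))

theorem levenshtein_cons_cons_le_substitute (x : α) (xs : List α) (y : β) (ys : List β) :
    levenshtein C (x :: xs) (y :: ys) ≤ C.substitute x y + levenshtein C xs ys :=
  (levenshtein_cons_cons C x xs y ys).trans_le ((min_le_right _ _).trans (min_le_right _ _))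

end

theorem exists_levenshtein_take_le_append {α δ : Type*} [AddCommMonoid δ] [LinearOrder δ]
    [CanonicallyOrderedAdd δ] (C : Levenshtein.Cost α α δ) (t y z : List α) :
    ∃ k ≤ t.length, levenshtein C y (t.take k) ≤ levenshtein C (y ++ z) t := by
  induction y generalizing t with
  | nil => exact ⟨0, Nat.zero_le _, by simp⟩
  | cons x y ihy =>
    induction t with
    | nil =>
      obtain ⟨_, -, h⟩ := ihy []
      rw [List.take_nil] at h
      exact ⟨0, le_rfl, by simpa using add_le_add_right h (C.delete x)⟩
    | cons c t iht =>
      rw [List.cons_append, levenshtein_cons_cons]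
      refine exists_and_le_min ?_ (exists_and_le_min ?_ ?_)
      · obtain ⟨k, hk, h⟩ := ihy (c :: t)
        exact ⟨k, hk, (levenshtein_cons_left_le C x y _).trans (by gcongr)⟩
      · obtain ⟨k, hk, h⟩ := iht
        refine ⟨k + 1, Nat.succ_le_succ hk, ?_⟩
        rw [List.take_succ_cons]
        rw [List.cons_append] at h
        exact (levenshtein_cons_right_le C _ c _).trans (by gcongr)
      · obtain ⟨k, hk, h⟩ := ihy t
        refine ⟨k + 1, Nat.succ_le_succ hk, ?_⟩
        rw [List.take_succ_cons]
        exact (levenshtein_cons_cons_le_substitute C x y c _).trans (by gcongr)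

/-- Lower-bound half of the optimistic edit-distance formula
(Equation (15)): for every continuation `z` of the prefix `y`, there is
some `0 ≤ k ≤ |t|` such that `ρ_levenshtein(y, t.take k)` (unit costs) is
at most `ρ_levenshtein(y ++ z, t)`; hence
`min_{0 ≤ k ≤ |t|} ρ_levenshtein(y, t.take k) ≤ ρ_levenshtein(y ++ z, t)`. -/
theorem optimistic_loss_lower_bound {C : Type*} [DecidableEq C]
    (t y z : List C) :
    ∃ k ≤ t.length,
      levenshtein Levenshtein.defaultCost y (t.take k) ≤
        levenshtein Levenshtein.defaultCost (y ++ z) t :=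
  exists_levenshtein_take_le_append _ t y z
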